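/- Let (Ω, Σ, P) be a probability space, let N : Ω → ℕ be a random variable and a, b ∈ ℝ with P(N = n) = (a + b/n)·P(N = n − 1) for every integer n ≥ 1. Let v ∈ (0, 1) with a·(1 − v) < 1, let {Z_k}_{k ≥ 1} be i.i.d. Bernoulli random variables with P(Z_1 = 1) = v, independent of N, and set M := Σ_{k=1}^N Z_k (with M := 0 on {N = 0}). Then P(M = m) = (ã + b̃/m)·P(M = m − 1) for every integer m ≥ 1, where ã := a·v / (1 − a·(1 − v)) and b̃ := b·v / (1 − a·(1 − v)); that is, the thinned claim number distribution again belongs to the Panjer(ã, b̃; 0) class. -/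

import Mathlib

/-!
Conditionally on `N = n`, the thinned count `M` is binomial with parameters `n` and `v`, so
`q m := P(M = m)` is the mixture `∑ₙ pₙ C(n, m) vᵐ (1 - v)ⁿ⁻ᵐ` with `pₙ := P(N = n)`. Pascal's rule
together with `(m + 1) C(n + 1, m + 1) = (n + 1) C(n, m)` turns the Panjer recursion of `p`, term by
term, into `q (m + 1) = a (1 - v) q (m + 1) + (a + b / (m + 1)) v q m`; solving for `q (m + 1)`
gives the thinned parameters.
-/

open MeasureTheory ProbabilityTheory

def IsPanjer (p : ℕ → ℝ) (a b : ℝ) : Prop :=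
  ∀ n : ℕ, p (n + 1) = (a + b / (n + 1)) * p n

-- For `m > n` the exponent `n - m` truncates, but then `n.choose m = 0`.
noncomputable def binomialProb (v : ℝ) (n m : ℕ) : ℝ :=
  n.choose m * v ^ m * (1 - v) ^ (n - m)

section binomialProb

variable (v : ℝ)

@[simp]
lemma binomialProb_zero_succ (m : ℕ) : binomialProb v 0 (m + 1) = 0 := by
  simp [binomialProb]

@[simp]
lemma binomialProb_zero_right (n : ℕ) : binomialProb v n 0 = (1 - v) ^ n := by
  simp [binomialProb]

lemma binomialProb_succ_succ (n m : ℕ) :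
    binomialProb v (n + 1) (m + 1)
      = (1 - v) * binomialProb v n (m + 1) + v * binomialProb v n m := by
  simp only [binomialProb, Nat.choose_succ_succ, Nat.cast_add, Nat.add_sub_add_right]
  rcases Nat.lt_or_ge m n with hmn | hnm
  · obtain ⟨k, rfl⟩ := Nat.exists_eq_add_of_lt hmn
    rw [show m + k + 1 - m = k + 1 by omega, show m + k + 1 - (m + 1) = k by omega]
    ring
  · rw [Nat.choose_eq_zero_of_lt (by omega : n < m + 1), Nat.sub_eq_zero_of_le hnm]
    ring

lemma succ_mul_binomialProb_succ_succ (n m : ℕ) :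
    (m + 1) * binomialProb v (n + 1) (m + 1) = (n + 1) * v * binomialProb v n m := by
  have h := congrArg (Nat.cast : ℕ → ℝ) (Nat.add_one_mul_choose_eq n m)
  push_cast at h
  simp only [binomialProb, Nat.add_sub_add_right]
  linear_combination (-(v ^ (m + 1) * (1 - v) ^ (n - m))) * h

end binomialProb

lemma IsPanjer.mul_binomialProb_succ {p : ℕ → ℝ} {a b : ℝ} (hp : IsPanjer p a b) (v : ℝ)
    (n m : ℕ) :
    p (n + 1) * binomialProb v (n + 1) (m + 1)
      = a * (1 - v) * (p n * binomialProb v n (m + 1))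
        + (a + b / (m + 1)) * v * (p n * binomialProb v n m) := by
  have hpascal := binomialProb_succ_succ v n m
  have hratio := succ_mul_binomialProb_succ_succ v n m
  rw [hp n]
  field_simp
  linear_combination (a * (n + 1) * (m + 1) * p n) * hpascal + b * p n * hratio

lemma IsPanjer.thinning {p q : ℕ → ℝ} {a b v : ℝ} (hp : IsPanjer p a b)
    (hq : ∀ m, HasSum (fun n => p n * binomialProb v n m) (q m)) (hav : a * (1 - v) ≠ 1) :
    IsPanjer q (a * v / (1 - a * (1 - v))) (b * v / (1 - a * (1 - v))) := by
  intro m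
  have hshift : HasSum (fun n => p (n + 1) * binomialProb v (n + 1) (m + 1)) (q (m + 1)) := by
    simpa using (hasSum_nat_add_iff' 1).mpr (hq (m + 1))
  have hsplit : HasSum (fun n => p (n + 1) * binomialProb v (n + 1) (m + 1))
      (a * (1 - v) * q (m + 1) + (a + b / (m + 1)) * v * q m) := by
    simp_rw [hp.mul_binomialProb_succ]
    exact ((hq (m + 1)).mul_left _).add ((hq m).mul_left _)
  have h := hshift.unique hsplit
  have hd : 1 - a * (1 - v) ≠ 0 := sub_ne_zero.mpr hav.symm
  field_simp at h ⊢
  linear_combination h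

namespace ProbabilityTheory

variable {Ω : Type*} [MeasurableSpace Ω] {P : Measure Ω}

lemma IndepFun.measureReal_inter_preimage_eq_mul {β γ : Type*} [MeasurableSpace β]
    [MeasurableSpace γ] {X : Ω → β} {Y : Ω → γ} (hXY : IndepFun X Y P) {s : Set β} {t : Set γ}
    (hs : MeasurableSet s) (ht : MeasurableSet t) :
    P.real (X ⁻¹' s ∩ Y ⁻¹' t) = P.real (X ⁻¹' s) * P.real (Y ⁻¹' t) := by
  simp only [measureReal_def, hXY.measure_inter_preimage_eq_mul s t hs ht, ENNReal.toReal_mul]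

variable {X Y : Ω → ℕ}

lemma IndepFun.measureReal_add_eq_zero (hXY : IndepFun X Y P) :
    P.real {ω | X ω + Y ω = 0} = P.real {ω | X ω = 0} * P.real {ω | Y ω = 0} := by
  have hset : {ω | X ω + Y ω = 0} = X ⁻¹' {0} ∩ Y ⁻¹' {0} := by
    ext ω; simp
  rw [hset, hXY.measureReal_inter_preimage_eq_mul (measurableSet_singleton 0)
    (measurableSet_singleton 0)]
  rfl

lemma IndepFun.measureReal_add_eq_succ_of_le_one [IsFiniteMeasure P] (hXY : IndepFun X Y P)
    (hX : Measurable X) (hY : Measurable Y) (hY1 : ∀ ω, Y ω ≤ 1) (m : ℕ) :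
    P.real {ω | X ω + Y ω = m + 1}
      = P.real {ω | X ω = m + 1} * P.real {ω | Y ω = 0}
        + P.real {ω | X ω = m} * P.real {ω | Y ω = 1} := by
  have hset : {ω | X ω + Y ω = m + 1}
      = (X ⁻¹' {m + 1} ∩ Y ⁻¹' {0}) ∪ (X ⁻¹' {m} ∩ Y ⁻¹' {1}) := by
    ext ω
    have := hY1 ω
    simp only [Set.mem_ofPred_eq, Set.mem_union, Set.mem_inter_iff, Set.mem_preimage,
      Set.mem_singleton_iff]
    omega
  have hdisj : Disjoint (X ⁻¹' {m + 1} ∩ Y ⁻¹' {0}) (X ⁻¹' {m} ∩ Y ⁻¹' {1}) :=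
    Set.disjoint_left.mpr fun ω h h' => by simp_all
  have hmeas : MeasurableSet (X ⁻¹' {m} ∩ Y ⁻¹' {1}) :=
    (hX (measurableSet_singleton m)).inter (hY (measurableSet_singleton 1))
  rw [hset, measureReal_union hdisj hmeas, hXY.measureReal_inter_preimage_eq_mul
    (measurableSet_singleton _) (measurableSet_singleton _),
    hXY.measureReal_inter_preimage_eq_mul (measurableSet_singleton _) (measurableSet_singleton _)]
  rfl

lemma iIndepFun.measureReal_sum_range_eq_binomialProb [IsProbabilityMeasure P] {Z : ℕ → Ω → ℕ}
    (hZiid : iIndepFun Z P) (hZ : ∀ k, Measurable (Z k)) (hZ01 : ∀ k ω, Z k ω ≤ 1) {v : ℝ}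
    (hZv : ∀ k, P.real {ω | Z k ω = 1} = v) (n m : ℕ) :
    P.real {ω | ∑ k ∈ Finset.range n, Z k ω = m} = binomialProb v n m := by
  have hZ0 : ∀ k, P.real {ω | Z k ω = 0} = 1 - v := fun k => by
    have hset : {ω | Z k ω = 0} = {ω | Z k ω = 1}ᶜ := by
      ext ω
      have := hZ01 k ω
      simp only [Set.mem_ofPred_eq, Set.mem_compl_iff]
      omega
    rw [hset, probReal_compl_eq_one_sub (s := {ω | Z k ω = 1})
      (hZ k (measurableSet_singleton 1)), hZv k]
  induction n generalizing m with
  | zero => cases m <;> simp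
  | succ n ih =>
    have hindep := hZiid.indepFun_sum_range_succ hZ n
    have hS : Measurable (∑ k ∈ Finset.range n, Z k) := by
      simpa only [← Finset.sum_apply] using Finset.measurable_sum _ fun k _ => hZ k
    simp only [Finset.sum_range_succ]
    cases m with
    | zero =>
      have := hindep.measureReal_add_eq_zero
      simp only [Finset.sum_apply] at this
      rw [this, ih, hZ0]
      simp [pow_succ]
    | succ m =>
      have := hindep.measureReal_add_eq_succ_of_le_one hS (hZ n) (hZ01 n) m
      simp only [Finset.sum_apply] at this
      rw [this, ih, ih, hZ0, hZv, binomialProb_succ_succ]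
      ring

lemma IndepFun.hasSum_measureReal_mem_at_index [IsFiniteMeasure P] {β : Type*}
    [MeasurableSpace β] {N : Ω → ℕ} {W : Ω → β} (hNW : IndepFun N W P) (hN : Measurable N)
    (hW : Measurable W) {S : ℕ → Set β} (hS : ∀ n, MeasurableSet (S n)) :
    HasSum (fun n => P.real {ω | N ω = n} * P.real (W ⁻¹' S n)) (P.real {ω | W ω ∈ S (N ω)}) := by
  have hset : {ω | W ω ∈ S (N ω)} = ⋃ n, N ⁻¹' {n} ∩ W ⁻¹' S n := by
    ext ω; simp
  have hdisj : Pairwise (Function.onFun Disjoint fun n => N ⁻¹' {n} ∩ W ⁻¹' S n) :=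
    fun i j hij => Set.disjoint_left.mpr fun ω h h' => hij (h.1.symm.trans h'.1)
  have hsum : P {ω | W ω ∈ S (N ω)} = ∑' n, P (N ⁻¹' {n}) * P (W ⁻¹' S n) := by
    rw [hset, measure_iUnion hdisj fun n => (hN (measurableSet_singleton n)).inter (hW (hS n))]
    exact tsum_congr fun n =>
      hNW.measure_inter_preimage_eq_mul _ _ (measurableSet_singleton n) (hS n)
  have h := ENNReal.hasSum_toReal (hsum ▸ measure_ne_top P _)
  rw [← ENNReal.tsum_toReal_eq fun n => ENNReal.mul_ne_top (measure_ne_top _ _)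
    (measure_ne_top _ _), ← hsum] at h
  simp only [ENNReal.toReal_mul] at h
  exact h

end ProbabilityTheory

theorem panjer_thinning_general
    {Ω : Type*} [MeasurableSpace Ω] (P : Measure Ω) [IsProbabilityMeasure P]
    (N : Ω → ℕ) (hN : Measurable N) (a b : ℝ)
    (hPanjer : ∀ n : ℕ, 1 ≤ n →
      (P {ω | N ω = n}).toReal = (a + b / (n : ℝ)) * (P {ω | N ω = n - 1}).toReal)
    (v : ℝ) (hav : a * (1 - v) < 1)
    (Z : ℕ → Ω → ℕ) (hZ : ∀ k, Measurable (Z k))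
    (hZ01 : ∀ k ω, Z k ω ≤ 1)
    (hZv : ∀ k, (P {ω | Z k ω = 1}).toReal = v)
    (hZiid : iIndepFun Z P)
    (hNZ : Indep (MeasurableSpace.comap N inferInstance)
      (MeasurableSpace.comap (fun ω (k : ℕ) => Z k ω) inferInstance) P) :
    ∀ m : ℕ, 1 ≤ m →
      (P {ω | (∑ k ∈ Finset.range (N ω), Z k ω) = m}).toReal
        = (a * v / (1 - a * (1 - v)) + (b * v / (1 - a * (1 - v))) / (m : ℝ))
          * (P {ω | (∑ k ∈ Finset.range (N ω), Z k ω) = m - 1}).toReal := by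
  have hN_panjer : IsPanjer (fun n => P.real {ω | N ω = n}) a b := fun n => by
    simpa [measureReal_def] using hPanjer (n + 1) n.succ_pos
  have hmixture (m : ℕ) : HasSum (fun n => P.real {ω | N ω = n} * binomialProb v n m)
      (P.real {ω | ∑ k ∈ Finset.range (N ω), Z k ω = m}) := by
    have h := IndepFun.hasSum_measureReal_mem_at_index hNZ hN (measurable_pi_lambda _ hZ)
      (S := fun n => {z : ℕ → ℕ | ∑ k ∈ Finset.range n, z k = m})
      fun n => Finset.measurable_sum _ (fun k _ => measurable_pi_apply k)
        (measurableSet_singleton m)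
    simp_rw [← hZiid.measureReal_sum_range_eq_binomialProb hZ hZ01 hZv]
    exact h
  have hM_panjer := hN_panjer.thinning hmixture hav.ne
  intro m hm
  obtain ⟨m, rfl⟩ := Nat.exists_eq_add_of_le' hm
  simpa [measureReal_def] using hM_panjer m

/-- Thinning a Panjer(a, b; 0) claim number `N` with i.i.d. Bernoulli(v)
indicators independent of `N` produces a claim number `M` in the Panjer(ã, b̃; 0) class with
`ã = a·v/(1 − a(1 − v))` and `b̃ = b·v/(1 − a(1 − v))`. -/
theorem panjer_thinning
    {Ω : Type*} [MeasurableSpace Ω] (P : Measure Ω) [IsProbabilityMeasure P]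
    (N : Ω → ℕ) (hN : Measurable N) (a b : ℝ)
    (hPanjer : ∀ n : ℕ, 1 ≤ n →
      (P {ω | N ω = n}).toReal = (a + b / (n : ℝ)) * (P {ω | N ω = n - 1}).toReal)
    (v : ℝ) (hv : v ∈ Set.Ioo (0 : ℝ) 1) (hav : a * (1 - v) < 1)
    (Z : ℕ → Ω → ℕ) (hZ : ∀ k, Measurable (Z k))
    (hZ01 : ∀ k ω, Z k ω ≤ 1)
    (hZv : ∀ k, (P {ω | Z k ω = 1}).toReal = v)
    (hZiid : iIndepFun Z P)
    (hZident : ∀ k, P.map (Z k) = P.map (Z 0))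
    (hNZ : Indep (MeasurableSpace.comap N inferInstance)
      (MeasurableSpace.comap (fun ω (k : ℕ) => Z k ω) inferInstance) P) :
    ∀ m : ℕ, 1 ≤ m →
      (P {ω | (∑ k ∈ Finset.range (N ω), Z k ω) = m}).toReal
        = (a * v / (1 - a * (1 - v)) + (b * v / (1 - a * (1 - v))) / (m : ℝ))
          * (P {ω | (∑ k ∈ Finset.range (N ω), Z k ω) = m - 1}).toReal :=
  panjer_thinning_general P N hN a b hPanjer v hav Z hZ hZ01 hZv hZiid hNZ
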